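/- If two nonsingular D×D integer matrices A and B are commutative (AB = BA) and coprime (a gcld of A and B is unimodular), then the product AB is a least common right multiple of A and B and also a least common left multiple of A and B. -/

import Mathlib

open Matrix

noncomputable section

/-- Real cast of an integer matrix. -/
def rmat {D : ℕ} (A : Matrix (Fin D) (Fin D) ℤ) : Matrix (Fin D) (Fin D) ℝ :=
  A.map Int.cast

/-- Real cast of an integer vector, viewed in Euclidean space. -/
def rvec {D : ℕ} (v : Fin D → ℤ) : EuclideanSpace ℝ (Fin D) :=
  WithLp.toLp 2 (fun i => (v i : ℝ))

/-- The lattice generated by a real matrix. -/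
def latt {D : ℕ} (A : Matrix (Fin D) (Fin D) ℝ) : Set (EuclideanSpace ℝ (Fin D)) :=
  {v | ∃ n : Fin D → ℤ, v = A.mulVec fun i => (n i : ℝ)}

/-- Minimum (Euclidean) distance of the lattice generated by a real matrix. -/
def lamMin {D : ℕ} (A : Matrix (Fin D) (Fin D) ℝ) : ℝ :=
  sInf {r | ∃ v ∈ latt A, v ≠ 0 ∧ ‖v‖ = r}

/-- The set of integer vectors of the lattice generated by an integer matrix. -/
def lattZ {D : ℕ} (A : Matrix (Fin D) (Fin D) ℤ) : Set (Fin D → ℤ) :=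
  {v | ∃ n : Fin D → ℤ, v = A.mulVec n}

/-- N(A): the integer points in the fundamental parallelepiped of a real matrix A. -/
def NN {D : ℕ} (A : Matrix (Fin D) (Fin D) ℝ) : Set (Fin D → ℤ) :=
  {k | ∃ x : Fin D → ℝ, (∀ i, 0 ≤ x i ∧ x i < 1) ∧ (fun i => (k i : ℝ)) = A.mulVec x}

/-- A is a left divisor of B (i.e. A⁻¹B is an integer matrix). -/
def LeftDvd {D : ℕ} (A B : Matrix (Fin D) (Fin D) ℤ) : Prop :=
  ∃ C : Matrix (Fin D) (Fin D) ℤ, B = A * C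

/-- G is a greatest common left divisor of A and B. -/
def IsGcld {D : ℕ} (G A B : Matrix (Fin D) (Fin D) ℤ) : Prop :=
  G.det ≠ 0 ∧ LeftDvd G A ∧ LeftDvd G B ∧
    ∀ C : Matrix (Fin D) (Fin D) ℤ, C.det ≠ 0 → LeftDvd C A → LeftDvd C B → LeftDvd C G

/-- R is a (nonsingular) right multiple of B. -/
def RightMulOf {D : ℕ} (R B : Matrix (Fin D) (Fin D) ℤ) : Prop :=
  ∃ P : Matrix (Fin D) (Fin D) ℤ, P.det ≠ 0 ∧ R = B * P

/-- R is a least common right multiple of the family M. -/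
def IsLcrm {D : ℕ} {ι : Type*} (R : Matrix (Fin D) (Fin D) ℤ)
    (M : ι → Matrix (Fin D) (Fin D) ℤ) : Prop :=
  R.det ≠ 0 ∧ (∀ i, RightMulOf R (M i)) ∧
    ∀ R' : Matrix (Fin D) (Fin D) ℤ, R'.det ≠ 0 → (∀ i, RightMulOf R' (M i)) →
      RightMulOf R' R

/-- Folding vector ⌊A⁻¹ m⌋ (element-wise floor). -/
def fold {D : ℕ} (A : Matrix (Fin D) (Fin D) ℤ) (m : Fin D → ℤ) : Fin D → ℤ :=
  fun i => ⌊((rmat A)⁻¹.mulVec fun j => (m j : ℝ)) i⌋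

/-- R is a (nonsingular) left multiple of B. -/
def LeftMulOf {D : ℕ} (R B : Matrix (Fin D) (Fin D) ℤ) : Prop :=
  ∃ P : Matrix (Fin D) (Fin D) ℤ, P.det ≠ 0 ∧ R = P * B

/-- R is a least common left multiple of the family M. -/
def IsLclm {D : ℕ} {ι : Type*} (R : Matrix (Fin D) (Fin D) ℤ)
    (M : ι → Matrix (Fin D) (Fin D) ℤ) : Prop :=
  R.det ≠ 0 ∧ (∀ i, LeftMulOf R (M i)) ∧
    ∀ R' : Matrix (Fin D) (Fin D) ℤ, R'.det ≠ 0 → (∀ i, LeftMulOf R' (M i)) →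
      LeftMulOf R' R


lemma joint_ker_eq_bot {K : Type*} [Field K] {V : Type*} [AddCommGroup V] [Module K V]
    [FiniteDimensional K V]
    (f g : Module.End K V) (hfg : Commute f g)
    (hsurj : ∀ v : V, ∃ x y, v = f x + g y)
    (v : V) (hv1 : f v = 0) (hv2 : g v = 0) : v = 0 := by
  have swap : ∀ a b : Module.End K V, Commute a b → ∀ w : V, a (b w) = b (a w) := by
    intro a b h w
    calc a (b w) = (a * b) w := rfl
      _ = (b * a) w := by rw [h.eq]
      _ = b (a w) := rfl
  set n := Module.finrank K V with hn
  rcases Nat.eq_zero_or_pos n with h0 | hpos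
  · have : Subsingleton V := Module.finrank_zero_iff.mp (by rw [← hn]; exact h0)
    exact Subsingleton.elim v 0
  have disj : ∀ h : Module.End K V, ∀ u, (h ^ n) u = 0 →
      u ∈ LinearMap.range (h ^ n) → u = 0 := by
    rintro h u hk ⟨w, hw⟩
    have hker : LinearMap.ker (h ^ (n + n)) = LinearMap.ker (h ^ n) := by
      rw [Module.End.ker_pow_eq_ker_pow_finrank_of_le (by omega : n ≤ n + n)]
    have hw2 : (h ^ (n + n)) w = 0 := by
      rw [pow_add, Module.End.mul_apply, hw, hk]
    have hwn : w ∈ LinearMap.ker (h ^ n) := hker ▸ LinearMap.mem_ker.mpr hw2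
    rw [← hw]; exact hwn
  have codis : ∀ h : Module.End K V,
      LinearMap.ker (h ^ n) ⊔ LinearMap.range (h ^ n) = ⊤ := by
    intro h
    have hinf : LinearMap.ker (h ^ n) ⊓ LinearMap.range (h ^ n) = ⊥ := by
      rw [Submodule.eq_bot_iff]
      rintro u ⟨hu1, hu2⟩
      exact disj h u hu1 hu2
    apply Submodule.eq_top_of_finrank_eq
    have h1 := Submodule.finrank_sup_add_finrank_inf_eq
      (LinearMap.ker (h ^ n)) (LinearMap.range (h ^ n))
    have h2 := LinearMap.finrank_range_add_finrank_ker (h ^ n)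
    rw [hinf, finrank_bot, add_zero] at h1
    omega
  have claim1 : ∀ m : ℕ, ∀ w : V, ∃ x y, w = (f ^ m) x + g y := by
    intro m
    induction m with
    | zero => intro w; exact ⟨w, 0, by simp⟩
    | succ m ih =>
      intro w
      obtain ⟨x, y, hxy⟩ := ih w
      obtain ⟨x1, y1, hx⟩ := hsurj x
      refine ⟨x1, (f ^ m) y1 + y, ?_⟩
      rw [hxy, hx, map_add, map_add, swap _ _ (hfg.pow_left m) y1]
      have hp : (f ^ m) (f x1) = (f ^ (m + 1)) x1 := by
        rw [pow_succ, Module.End.mul_apply]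
      rw [hp]
      abel
  have claim2 : ∀ m : ℕ, ∀ w : V, ∃ x y, w = (f ^ n) x + (g ^ m) y := by
    intro m
    induction m with
    | zero => intro w; exact ⟨0, w, by simp⟩
    | succ m ih =>
      intro w
      obtain ⟨x, y, hxy⟩ := ih w
      obtain ⟨x2, y2, hy⟩ := claim1 n y
      refine ⟨x + (g ^ m) x2, y2, ?_⟩
      rw [hxy, hy, map_add, map_add,
        swap _ _ ((hfg.symm).pow_pow m n) x2]
      have hp : (g ^ m) (g y2) = (g ^ (m + 1)) y2 := by
        rw [pow_succ, Module.End.mul_apply]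
      rw [hp]
      abel
  have hvker : ∀ h : Module.End K V, h v = 0 → (h ^ n) v = 0 := by
    intro h hv
    obtain ⟨m, hm⟩ : ∃ m, n = m + 1 := ⟨n - 1, by omega⟩
    rw [hm, pow_succ, Module.End.mul_apply, hv, map_zero]
  obtain ⟨x, y, hxy⟩ := claim2 n v
  have hy : y ∈ LinearMap.ker (f ^ n) ⊔ LinearMap.range (f ^ n) := by
    rw [codis f]; trivial
  obtain ⟨y0, hy0, y1, hy1, hsum⟩ := Submodule.mem_sup.mp hy
  obtain ⟨z, hz⟩ := hy1
  have key : v - (g ^ n) y0 = (f ^ n) (x + (g ^ n) z) := by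
    rw [map_add, swap _ _ (hfg.pow_pow n n) z, hz, hxy, ← hsum, map_add]
    abel
  have key2 : (f ^ n) (v - (g ^ n) y0) = 0 := by
    rw [map_sub, hvker f hv1, swap _ _ (hfg.pow_pow n n) y0,
      LinearMap.mem_ker.mp hy0, map_zero, sub_zero]
  have hveq : v = (g ^ n) y0 := by
    have := disj f (v - (g ^ n) y0) key2 ⟨x + (g ^ n) z, key.symm⟩
    exact sub_eq_zero.mp this
  exact disj g v (hvker g hv2) ⟨y0, hveq.symm⟩

lemma int_mulVec_injective {D : ℕ} (A : Matrix (Fin D) (Fin D) ℤ) (hA : A.det ≠ 0) :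
    Function.Injective A.mulVec := by
  have h : ¬ ∃ v ≠ 0, A.mulVec v = 0 := by
    rw [Matrix.exists_mulVec_eq_zero_iff]; exact hA
  intro x y hxy
  by_contra hne
  exact h ⟨x - y, sub_ne_zero.mpr hne, by
    rw [Matrix.mulVec_sub, sub_eq_zero]; exact hxy⟩

lemma lattice_basis {D : ℕ} (M : Submodule ℤ (Fin D → ℤ))
    (A : Matrix (Fin D) (Fin D) ℤ) (hA : A.det ≠ 0)
    (hle : LinearMap.range A.mulVecLin ≤ M) :
    ∃ G0 : Matrix (Fin D) (Fin D) ℤ, G0.det ≠ 0 ∧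
      ∀ v, v ∈ M ↔ ∃ c, v = G0.mulVec c := by
  obtain ⟨n, bas0⟩ := M.basisOfPid (Pi.basisFun ℤ (Fin D))
  have hfr : Module.finrank ℤ M = D := by
    refine le_antisymm ?_ ?_
    · simpa [Module.finrank_fin_fun] using M.finrank_le
    · have h1 : Module.finrank ℤ (LinearMap.range A.mulVecLin) = D := by
        rw [LinearMap.finrank_range_of_inj (by exact int_mulVec_injective A hA),
          Module.finrank_fin_fun]
      calc D = Module.finrank ℤ (LinearMap.range A.mulVecLin) := h1.symm
        _ ≤ Module.finrank ℤ M := Submodule.finrank_mono hle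
  have hn : n = D := by
    rw [← hfr, Module.finrank_eq_card_basis bas0, Fintype.card_fin]
  subst hn
  set bas := bas0 with hbas
  refine ⟨Matrix.of fun i j => ((bas j : Fin n → ℤ)) i, ?_, ?_⟩
  · intro hdet
    obtain ⟨c, hc0, hc⟩ := Matrix.exists_mulVec_eq_zero_iff.mpr hdet
    have hli := bas.linearIndependent.map' M.subtype (Submodule.ker_subtype M)
    rw [Fintype.linearIndependent_iff] at hli
    refine hc0 (funext fun j => hli c ?_ j)
    ext i
    simpa [Matrix.mulVec, dotProduct, mul_comm] using congrFun hc i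
  · intro v
    constructor
    · intro hv
      refine ⟨fun j => bas.repr ⟨v, hv⟩ j, ?_⟩
      have h1 := bas.sum_repr ⟨v, hv⟩
      have h2 := congrArg (Submodule.subtype M) h1
      simp only [map_sum, LinearMap.map_smul, Submodule.coe_subtype] at h2
      ext i
      have h3 := congrFun h2.symm i
      simpa [Matrix.mulVec, dotProduct, mul_comm] using h3
    · rintro ⟨c, rfl⟩
      have hsum : (Matrix.of fun i j => ((bas j : Fin n → ℤ)) i).mulVec c =
          ∑ j, c j • (bas j : Fin n → ℤ) := by
        ext i
        simp [Matrix.mulVec, dotProduct, mul_comm]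
      rw [hsum]
      exact Submodule.sum_mem M fun j _ => Submodule.smul_mem M _ ((bas j).2)

/-- columns of A all in the G0-lattice gives factorization -/
lemma cols_fact {D : ℕ} (A G0 : Matrix (Fin D) (Fin D) ℤ)
    (h : ∀ j, ∃ c, (fun i => A i j) = G0.mulVec c) :
    ∃ C, A = G0 * C := by
  choose c hc using h
  refine ⟨Matrix.of fun i j => c j i, ?_⟩
  ext i j
  have := congrFun (hc j) i
  simpa [Matrix.mul_apply, Matrix.mulVec, dotProduct] using this

/-- from pointwise surjectivity to a matrix Bezout identity -/
lemma vec_to_matrix_bezout {D : ℕ} (A B : Matrix (Fin D) (Fin D) ℤ)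
    (h : ∀ v : Fin D → ℤ, ∃ x y, v = A.mulVec x + B.mulVec y) :
    ∃ U V : Matrix (Fin D) (Fin D) ℤ, A * U + B * V = 1 := by
  have h' : ∀ j : Fin D, ∃ x y, (Pi.single j 1 : Fin D → ℤ) = A.mulVec x + B.mulVec y :=
    fun j => h _
  choose x y hxy using h'
  refine ⟨Matrix.of fun i j => x j i, Matrix.of fun i j => y j i, ?_⟩
  ext i j
  have := congrFun (hxy j) i
  simp only [Pi.add_apply, Matrix.mulVec, dotProduct, Pi.single_apply] at this
  simp only [Matrix.add_apply, Matrix.mul_apply, Matrix.one_apply, Matrix.of_apply]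
  rw [← this]

lemma left_bezout {D : ℕ} (A B G : Matrix (Fin D) (Fin D) ℤ)
    (hA : A.det ≠ 0)
    (hgcld : ∀ C : Matrix (Fin D) (Fin D) ℤ, C.det ≠ 0 →
      (∃ C1, A = C * C1) → (∃ C2, B = C * C2) → ∃ W, G = C * W)
    (hGu : IsUnit G.det) :
    ∀ v : Fin D → ℤ, ∃ x y, v = A.mulVec x + B.mulVec y := by
  set M : Submodule ℤ (Fin D → ℤ) :=
    LinearMap.range A.mulVecLin ⊔ LinearMap.range B.mulVecLin with hM
  obtain ⟨G0, hG0det, hG0⟩ := lattice_basis M A hA le_sup_left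
  have colmem : ∀ (X : Matrix (Fin D) (Fin D) ℤ),
      LinearMap.range X.mulVecLin ≤ M → ∃ C, X = G0 * C := by
    intro X hle
    refine cols_fact X G0 fun j => (hG0 _).mp (hle ⟨Pi.single j 1, ?_⟩)
    ext i
    simp [Matrix.mulVecLin, Matrix.mulVec, dotProduct, Pi.single_apply]
  obtain ⟨W, hW⟩ := hgcld G0 hG0det (colmem A le_sup_left) (colmem B le_sup_right)
  have hG0u : IsUnit G0.det := by
    rw [hW, Matrix.det_mul] at hGu
    exact isUnit_of_mul_isUnit_left hGu
  -- M = ⊤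
  intro v
  have hv : v ∈ M := by
    rw [hG0 v]
    refine ⟨G0⁻¹.mulVec v, ?_⟩
    rw [Matrix.mulVec_mulVec, Matrix.mul_nonsing_inv G0 hG0u, Matrix.one_mulVec]
  obtain ⟨a, ⟨x, hx⟩, b, ⟨y, hy⟩, hab⟩ := Submodule.mem_sup.mp hv
  exact ⟨x, y, by rw [← hab, ← hx, ← hy]; rfl⟩

lemma right_bezout {D : ℕ} (A B : Matrix (Fin D) (Fin D) ℤ)
    (hA : A.det ≠ 0) (hcomm : A * B = B * A)
    (U V : Matrix (Fin D) (Fin D) ℤ) (hbez : A * U + B * V = 1) :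
    ∃ U' V' : Matrix (Fin D) (Fin D) ℤ, U' * A + V' * B = 1 := by
  set M : Submodule ℤ (Fin D → ℤ) :=
    LinearMap.range Aᵀ.mulVecLin ⊔ LinearMap.range Bᵀ.mulVecLin with hM
  have hAT : Aᵀ.det ≠ 0 := by rwa [Matrix.det_transpose]
  obtain ⟨G1, hG1det, hG1⟩ := lattice_basis M Aᵀ hAT le_sup_left
  have colmem : ∀ (X : Matrix (Fin D) (Fin D) ℤ),
      LinearMap.range X.mulVecLin ≤ M → ∃ C, X = G1 * C := by
    intro X hle
    refine cols_fact X G1 fun j => (hG1 _).mp (hle ⟨Pi.single j 1, ?_⟩)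
    ext i
    simp [Matrix.mulVecLin, Matrix.mulVec, dotProduct, Pi.single_apply]
  obtain ⟨CA, hCA⟩ := colmem Aᵀ le_sup_left
  obtain ⟨CB, hCB⟩ := colmem Bᵀ le_sup_right
  -- G1 is unimodular
  have hG1u : IsUnit G1.det := by
    by_contra hu
    obtain ⟨p, hp, hpd⟩ := Nat.exists_prime_and_dvd
      (fun h1 => hu (Int.isUnit_iff_natAbs_eq.mpr h1))
    haveI : Fact p.Prime := ⟨hp⟩
    set K := ZMod p
    set φ := Int.castRingHom K with hφ
    have hpdvd : (p : ℤ) ∣ G1.det := by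
      rwa [← Int.natAbs_dvd_natAbs, Int.natAbs_natCast]
    have hdet0 : (G1.map φ).det = 0 := by
      have h1 : G1.map φ = φ.mapMatrix G1 := rfl
      rw [h1, ← RingHom.map_det]
      exact (ZMod.intCast_zmod_eq_zero_iff_dvd G1.det p).mpr hpdvd
    have hdetT : ((G1.map φ)ᵀ).det = 0 := by rwa [Matrix.det_transpose]
    obtain ⟨w, hw0, hw⟩ := Matrix.exists_mulVec_eq_zero_iff.mpr hdetT
    -- A.map φ kills w
    have kill : ∀ (X CX : Matrix (Fin D) (Fin D) ℤ), Xᵀ = G1 * CX →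
        (X.map φ).mulVec w = 0 := by
      intro X CX hX
      have h1 : (X.map φ) = (CX.map φ)ᵀ * (G1.map φ)ᵀ := by
        have := congrArg (fun Y => (Y.map φ)ᵀ) hX
        simpa [Matrix.transpose_map, Matrix.map_mul, Matrix.transpose_mul] using this
      rw [h1, ← Matrix.mulVec_mulVec, hw, Matrix.mulVec_zero]
    have killA := kill A CA hCA
    have killB := kill B CB hCB
    -- surjectivity over K
    have hbez' : (A.map φ) * (U.map φ) + (B.map φ) * (V.map φ) = 1 := by
      have := congrArg (fun Y => Y.map φ) hbez
      simpa [Matrix.map_mul, Matrix.map_add, Matrix.map_one] using this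
    have hsurj : ∀ v : Fin D → K, ∃ x y,
        v = (A.map φ).mulVecLin x + (B.map φ).mulVecLin y := by
      intro v
      refine ⟨(U.map φ).mulVec v, (V.map φ).mulVec v, ?_⟩
      simp only [Matrix.mulVecLin_apply, Matrix.mulVec_mulVec]
      show v = (A.map φ) *ᵥ ((U.map φ) *ᵥ v) + (B.map φ) *ᵥ ((V.map φ) *ᵥ v)
      rw [Matrix.mulVec_mulVec, Matrix.mulVec_mulVec, ← Matrix.add_mulVec, hbez', Matrix.one_mulVec]
    have hcomm' : Commute (A.map φ).mulVecLin (B.map φ).mulVecLin := by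
      have hc : (A.map φ) * (B.map φ) = (B.map φ) * (A.map φ) := by
        have := congrArg (fun Y => Y.map φ) hcomm
        simpa [Matrix.map_mul] using this
      show _ * _ = _ * _
      refine LinearMap.ext fun v => ?_
      show (A.map φ).mulVecLin ((B.map φ).mulVecLin v) =
        (B.map φ).mulVecLin ((A.map φ).mulVecLin v)
      simp only [Matrix.mulVecLin_apply, Matrix.mulVec_mulVec]
      exact congrArg (fun X => X *ᵥ v) hc
    have := joint_ker_eq_bot (A.map φ).mulVecLin (B.map φ).mulVecLin hcomm' hsurj w
      (by simpa using killA) (by simpa using killB)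
    exact hw0 this
  -- M = ⊤ and Bezout for transposes
  have hvsurj : ∀ v : Fin D → ℤ, ∃ x y, v = Aᵀ.mulVec x + Bᵀ.mulVec y := by
    intro v
    have hv : v ∈ M := by
      rw [hG1 v]
      refine ⟨G1⁻¹.mulVec v, ?_⟩
      rw [Matrix.mulVec_mulVec, Matrix.mul_nonsing_inv G1 hG1u, Matrix.one_mulVec]
    obtain ⟨a, ⟨x, hx⟩, b, ⟨y, hy⟩, hab⟩ := Submodule.mem_sup.mp hv
    exact ⟨x, y, by rw [← hab, ← hx, ← hy]; rfl⟩
  obtain ⟨U', V', hUV⟩ := vec_to_matrix_bezout Aᵀ Bᵀ hvsurj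
  refine ⟨U'ᵀ, V'ᵀ, ?_⟩
  have := congrArg Matrix.transpose hUV
  simpa [Matrix.transpose_add, Matrix.transpose_mul] using this

-- rational computations
lemma key_right {D : ℕ} (A B P Q U V R : Matrix (Fin D) (Fin D) ℚ)
    (hB : IsUnit B.det)
    (hc : A * B = B * A) (hbez : U * A + V * B = 1)
    (hP : R = A * P) (hQ : R = B * Q) :
    (A * B) * (U * Q + V * P) = R := by
  have hBi := Matrix.mul_nonsing_inv B hB
  have hiB := Matrix.nonsing_inv_mul B hB
  have hcomminv : A * B⁻¹ = B⁻¹ * A := by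
    calc A * B⁻¹ = 1 * (A * B⁻¹) := (one_mul _).symm
      _ = B⁻¹ * ((B * A) * B⁻¹) := by rw [← hiB]; noncomm_ring
      _ = B⁻¹ * ((A * B) * B⁻¹) := by rw [hc]
      _ = B⁻¹ * (A * 1) := by rw [mul_assoc A B B⁻¹, hBi]
      _ = B⁻¹ * A := by rw [mul_one]
  set S := B⁻¹ * P with hS
  have hPS : B * S = P := by rw [hS, ← mul_assoc, hBi, one_mul]
  have hQS : A * S = Q := by
    have h1 : B * Q = A * (B * S) := by rw [hPS, ← hP, hQ]
    have h2 : B * Q = B * (A * S) := by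
      rw [h1]
      calc A * (B * S) = (A * B) * S := by rw [mul_assoc]
        _ = (B * A) * S := by rw [hc]
        _ = B * (A * S) := by rw [mul_assoc]
    calc A * S = 1 * (A * S) := (one_mul _).symm
      _ = B⁻¹ * (B * (A * S)) := by rw [← hiB, mul_assoc]
      _ = B⁻¹ * (B * Q) := by rw [← h2]
      _ = (B⁻¹ * B) * Q := by rw [mul_assoc]
      _ = Q := by rw [hiB, one_mul]
  calc (A * B) * (U * Q + V * P)
      = (A * B) * (U * (A * S) + V * (B * S)) := by rw [hQS, hPS]
    _ = (A * B) * ((U * A + V * B) * S) := by noncomm_ring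
    _ = (A * B) * S := by rw [hbez, one_mul]
    _ = A * (B * (B⁻¹ * P)) := by rw [hS, mul_assoc]
    _ = A * P := by rw [← mul_assoc B, hBi, one_mul]
    _ = R := hP.symm

lemma key_left {D : ℕ} (A B P Q U V R : Matrix (Fin D) (Fin D) ℚ)
    (hB : IsUnit B.det)
    (hc : A * B = B * A) (hbez : A * U + B * V = 1)
    (hP : R = P * A) (hQ : R = Q * B) :
    (Q * U + P * V) * (A * B) = R := by
  have hBi := Matrix.mul_nonsing_inv B hB
  have hiB := Matrix.nonsing_inv_mul B hB
  have hcomminv : B⁻¹ * A = A * B⁻¹ := by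
    calc B⁻¹ * A = (B⁻¹ * A) * 1 := (mul_one _).symm
      _ = B⁻¹ * ((A * B) * B⁻¹) := by rw [← hBi]; noncomm_ring
      _ = B⁻¹ * ((B * A) * B⁻¹) := by rw [hc]
      _ = (B⁻¹ * B) * (A * B⁻¹) := by noncomm_ring
      _ = A * B⁻¹ := by rw [hiB, one_mul]
  set S := P * B⁻¹ with hS
  have hPS : S * B = P := by rw [hS, mul_assoc, hiB, mul_one]
  have hQS : S * A = Q := by
    have h1 : Q * B = ((P * B⁻¹) * A) * B := by
      calc Q * B = P * A := by rw [← hQ, hP]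
        _ = (P * (B⁻¹ * B)) * A := by rw [hiB, mul_one]
        _ = ((P * B⁻¹) * B) * A := by noncomm_ring
        _ = (P * B⁻¹) * (B * A) := by rw [mul_assoc]
        _ = (P * B⁻¹) * (A * B) := by rw [hc]
        _ = ((P * B⁻¹) * A) * B := by rw [← mul_assoc]
    have h2 : Q = (P * B⁻¹) * A := by
      have h3 := congrArg (fun X => X * B⁻¹) h1
      simpa [mul_assoc, hBi] using h3
    rw [hS]
    exact h2.symm
  calc (Q * U + P * V) * (A * B)
      = ((S * A) * U + (S * B) * V) * (A * B) := by rw [hQS, hPS]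
    _ = (S * (A * U + B * V)) * (A * B) := by noncomm_ring
    _ = S * (A * B) := by rw [hbez, mul_one]
    _ = P * (B⁻¹ * A) * B := by rw [hS]; noncomm_ring
    _ = P * (A * B⁻¹) * B := by rw [hcomminv]
    _ = P * A * (B⁻¹ * B) := by noncomm_ring
    _ = R := by rw [hiB, mul_one, hP]

def ψ {D : ℕ} : Matrix (Fin D) (Fin D) ℤ →+* Matrix (Fin D) (Fin D) ℚ :=
  (Int.castRingHom ℚ).mapMatrix

lemma ψ_inj {D : ℕ} : Function.Injective (ψ (D := D)) := by
  intro X Y h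
  exact Matrix.map_injective (f := (Int.cast : ℤ → ℚ)) Int.cast_injective h

lemma ψ_det_isUnit {D : ℕ} {X : Matrix (Fin D) (Fin D) ℤ} (h : X.det ≠ 0) :
    IsUnit (ψ X).det := by
  rw [isUnit_iff_ne_zero]
  have h1 : (ψ X : Matrix (Fin D) (Fin D) ℚ) = (Int.castRingHom ℚ).mapMatrix X := rfl
  rw [h1, ← RingHom.map_det]
  simpa using h


/-- for commutative and coprime nonsingular integer matrices A
and B, the product AB is both an lcrm and an lclm of A and B. -/
theorem product_is_lcm_of_commuting_coprime {D : ℕ} (hD : 0 < D)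
    (A B : Matrix (Fin D) (Fin D) ℤ) (hA : A.det ≠ 0) (hB : B.det ≠ 0)
    (hcomm : A * B = B * A)
    (G : Matrix (Fin D) (Fin D) ℤ) (hG : IsGcld G A B) (hGu : IsUnit G.det) :
    IsLcrm (A * B) ![A, B] ∧ IsLclm (A * B) ![A, B] := by
  have hABdet : (A * B).det ≠ 0 := by
    rw [Matrix.det_mul]; exact mul_ne_zero hA hB
  obtain ⟨U, V, hbez⟩ := vec_to_matrix_bezout A B
    (left_bezout A B G hA hG.2.2.2 hGu)
  obtain ⟨U', V', hbez'⟩ := right_bezout A B hA hcomm U V hbez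
  have hcommQ : ψ A * ψ B = ψ B * ψ A := by rw [← _root_.map_mul, ← _root_.map_mul, hcomm]
  constructor
  · refine ⟨hABdet, ?_, ?_⟩
    · intro i
      fin_cases i
      · exact ⟨B, hB, rfl⟩
      · exact ⟨A, hA, hcomm⟩
    · intro R' hR' h
      obtain ⟨P, hPdet, hP⟩ := h 0
      obtain ⟨Q, hQdet, hQ⟩ := h 1
      simp only [Matrix.cons_val_zero] at hP
      simp only [Matrix.cons_val_one, Matrix.cons_val_zero] at hQ
      have hmain : (A * B) * (U' * Q + V' * P) = R' := by
        apply ψ_inj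
        simp only [_root_.map_mul, _root_.map_add]
        exact key_right (ψ A) (ψ B) (ψ P) (ψ Q) (ψ U') (ψ V') (ψ R')
          (ψ_det_isUnit hB) hcommQ
          (by rw [← _root_.map_mul, ← _root_.map_mul, ← _root_.map_add, hbez', _root_.map_one])
          (by rw [← _root_.map_mul, hP]) (by rw [← _root_.map_mul, hQ])
      refine ⟨U' * Q + V' * P, ?_, hmain.symm⟩
      intro hS0
      have := congrArg Matrix.det hmain
      rw [Matrix.det_mul, hS0, mul_zero] at this
      rw [hP, Matrix.det_mul] at this
      exact mul_ne_zero hA hPdet this.symm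
  · refine ⟨hABdet, ?_, ?_⟩
    · intro i
      fin_cases i
      · exact ⟨B, hB, hcomm⟩
      · exact ⟨A, hA, rfl⟩
    · intro R' hR' h
      obtain ⟨P, hPdet, hP⟩ := h 0
      obtain ⟨Q, hQdet, hQ⟩ := h 1
      simp only [Matrix.cons_val_zero] at hP
      simp only [Matrix.cons_val_one, Matrix.cons_val_zero] at hQ
      have hmain : (Q * U + P * V) * (A * B) = R' := by
        apply ψ_inj
        simp only [_root_.map_mul, _root_.map_add]
        exact key_left (ψ A) (ψ B) (ψ P) (ψ Q) (ψ U) (ψ V) (ψ R')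
          (ψ_det_isUnit hB) hcommQ
          (by rw [← _root_.map_mul, ← _root_.map_mul, ← _root_.map_add, hbez, _root_.map_one])
          (by rw [← _root_.map_mul, hP]) (by rw [← _root_.map_mul, hQ])
      refine ⟨Q * U + P * V, ?_, hmain.symm⟩
      intro hS0
      have := congrArg Matrix.det hmain
      rw [Matrix.det_mul, hS0, zero_mul] at this
      rw [hP, Matrix.det_mul] at this
      exact mul_ne_zero hPdet hA this.symm
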